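/- For the function f(x) = exp(‖x‖²) on ℝⁿ and any L ≥ 2, the matrix M_L(x) = (1 + ‖∇f(x)‖)·(I + ‖∇f(x)‖·xxᵀ/‖x‖²) − (2exp(‖x‖²)/L)·(I + 2xxᵀ) is positive semidefinite for all x ≠ 0; equivalently, f satisfies the second-order characterization of (L, 1)-anisotropic smoothness relative to φ(x) = −‖x‖ − ln(1 − ‖x‖). -/

import Mathlib

open scoped RealInnerProductSpace

/-! The gradient of `f` is `2 exp(r²) x` with `r = ‖x‖`, so the quadratic form of `M_L(x)` at `v`
splits as `A(r) ‖v‖² + B(r) ⟪x, v⟫² / r²`. Since `L ≥ 2`, the subtracted term is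
at most `exp(r²)` times `‖v‖² + 2 ⟪x, v⟫²`, and both coefficients are then nonnegative: `B ≥ 0`
because `exp(r²) ≥ 1`, and `A ≥ 0` reduces to `1 ≤ exp(-r²) + 2r`. -/

namespace Real

lemma one_le_exp_neg_sq_add_two_mul {r : ℝ} (hr : 0 ≤ r) : 1 ≤ exp (-r ^ 2) + 2 * r := by
  rcases le_total r 2 with hr2 | hr2
  · nlinarith [add_one_le_exp (-r ^ 2)]
  · linarith [exp_pos (-r ^ 2)]

lemma exp_sq_le_one_add_two_mul_exp_sq_mul {r : ℝ} (hr : 0 ≤ r) :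
    exp (r ^ 2) ≤ 1 + 2 * exp (r ^ 2) * r := by
  have h := mul_le_mul_of_nonneg_left (one_le_exp_neg_sq_add_two_mul hr) (exp_pos (r ^ 2)).le
  rw [mul_one, mul_add, ← exp_add, add_neg_cancel, exp_zero] at h
  linarith

lemma exp_sq_quadratic_form_nonneg {r L s t : ℝ} (hr : 0 < r) (hL : 2 ≤ L) :
    0 ≤ (1 + 2 * exp (r ^ 2) * r) * (s ^ 2 + 2 * exp (r ^ 2) * r * t ^ 2 / r ^ 2)
      - 2 * exp (r ^ 2) / L * (s ^ 2 + 2 * t ^ 2) := by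
  set e := exp (r ^ 2)
  have he : 1 ≤ e := one_le_exp (sq_nonneg r)
  have hc : 2 * e / L ≤ e := by
    rw [div_le_iff₀ (by linarith)]
    nlinarith
  have hA : 0 ≤ 1 + 2 * e * r - 2 * e / L := by
    linarith [exp_sq_le_one_add_two_mul_exp_sq_mul hr.le]
  have hB : 0 ≤ (1 + 2 * e * r) * (2 * e * r) - 2 * e / L * (2 * r ^ 2) := by
    have h2r : 0 ≤ 2 * e * r * (1 + 2 * e * r - r) := by
      have : 0 ≤ 1 + 2 * e * r - r := by nlinarith
      positivity
    nlinarith [mul_le_mul_of_nonneg_right hc (by positivity : (0 : ℝ) ≤ 2 * r ^ 2)]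
  have hsplit : (1 + 2 * e * r) * (s ^ 2 + 2 * e * r * t ^ 2 / r ^ 2) - 2 * e / L * (s ^ 2 + 2 * t ^ 2)
      = (1 + 2 * e * r - 2 * e / L) * s ^ 2
        + ((1 + 2 * e * r) * (2 * e * r) - 2 * e / L * (2 * r ^ 2)) * (t / r) ^ 2 := by
    field_simp
    ring
  rw [hsplit]
  positivity

end Real

section InnerProductSpace

variable {E : Type*} [NormedAddCommGroup E] [InnerProductSpace ℝ E] [CompleteSpace E]

lemma hasGradientAt_exp_norm_sq (x : E) :
    HasGradientAt (fun y : E => Real.exp (‖y‖ ^ 2)) ((2 * Real.exp (‖x‖ ^ 2)) • x) x := by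
  rw [hasGradientAt_iff_hasFDerivAt]
  refine ((Real.hasDerivAt_exp _).comp_hasFDerivAt x (hasStrictFDerivAt_norm_sq x).hasFDerivAt)
    |>.congr_fderiv ?_
  ext v
  simp
  ring

lemma norm_gradient_exp_norm_sq (x : E) :
    ‖gradient (fun y : E => Real.exp (‖y‖ ^ 2)) x‖ = 2 * Real.exp (‖x‖ ^ 2) * ‖x‖ := by
  rw [(hasGradientAt_exp_norm_sq x).gradient, norm_smul, Real.norm_of_nonneg (by positivity)]

end InnerProductSpace

/-- For `f(x) = exp(‖x‖²)` and `L ≥ 2`, the matrix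
`M_L(x) = (1+‖∇f(x)‖)(I + ‖∇f(x)‖ xxᵀ/‖x‖²) − (2exp(‖x‖²)/L)(I + 2xxᵀ)` is positive
semidefinite for all `x ≠ 0` (stated via its quadratic form). -/
theorem exp_norm_sq_anisotropic_second_order (n : ℕ) (L : ℝ) (hL : 2 ≤ L)
    (f : EuclideanSpace ℝ (Fin n) → ℝ) (hf : f = fun x => Real.exp (‖x‖ ^ 2))
    (x : EuclideanSpace ℝ (Fin n)) (hx : x ≠ 0) :
    ∀ v : EuclideanSpace ℝ (Fin n),
      0 ≤ (1 + ‖gradient f x‖) * (‖v‖ ^ 2 + ‖gradient f x‖ * ⟪x, v⟫ ^ 2 / ‖x‖ ^ 2)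
          - (2 * Real.exp (‖x‖ ^ 2) / L) * (‖v‖ ^ 2 + 2 * ⟪x, v⟫ ^ 2) := by
  intro v
  rw [hf, norm_gradient_exp_norm_sq]
  exact Real.exp_sq_quadratic_form_nonneg (norm_pos_iff.mpr hx) hL
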